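/- Second-order accuracy of the Strang/leapfrog splitting: for n×n complex matrices A, B, exp(xA/2)·exp(xB)·exp(xA/2) = exp(x(A+B)) + O(x³) as x → 0; equivalently, the difference of the two sides, when expanded in powers of x, has vanishing coefficients in degrees 0, 1, and 2. -/

import Mathlib

/-!
Replace each exponential by its quadratic Taylor polynomial `1 + M + M²/2`, which is exact up to
`O(‖M‖³)` on bounded sets. With `a = (x/2)•A` and `b = x•B`, the products
`(1 + a + a²/2)(1 + b + b²/2)(1 + a + a²/2)` and `1 + (2a + b) + (2a + b)²/2` have the same terms
of degree at most two in `(a, b)`, so the truncated sides differ by `O(x³)` as well. All estimates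
are big-O statements along the principal filter of the closed unit ball, on which continuous
functions are bounded.
-/

open Matrix NormedSpace

attribute [local instance] Matrix.linftyOpNormedRing Matrix.linftyOpNormedAlgebra

open Finset Nat Filter Asymptotics Metric

def expQuadratic (𝕜 : Type*) {𝔸 : Type*} [Field 𝕜] [Ring 𝔸] [Module 𝕜 𝔸] (M : 𝔸) : 𝔸 :=
  1 + M + (2 : 𝕜)⁻¹ • M ^ 2

section ExpRemainder

variable {𝕂 𝔸 : Type*} [RCLike 𝕂] [NormedRing 𝔸] [NormedAlgebra 𝕂 𝔸] [CompleteSpace 𝔸]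

theorem norm_exp_sub_sum_range_le (M : 𝔸) (n : ℕ) :
    ‖exp M - ∑ k ∈ range (n + 1), (k !⁻¹ : 𝕂) • M ^ k‖ ≤ ‖M‖ ^ (n + 1) * Real.exp ‖M‖ := by
  have htail := (hasSum_nat_add_iff' (n + 1)).mpr (exp_series_hasSum_exp' (𝕂 := 𝕂) M)
  have hmajorant : HasSum (fun i => ‖M‖ ^ (n + 1) * (‖M‖ ^ i / i !))
      (‖M‖ ^ (n + 1) * Real.exp ‖M‖) := by
    rw [Real.exp_eq_exp_ℝ]
    exact (expSeries_div_hasSum_exp ‖M‖).mul_left _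
  refine htail.norm_le_of_bounded hmajorant fun i => ?_
  calc ‖((i + (n + 1))! : 𝕂)⁻¹ • M ^ (i + (n + 1))‖
      ≤ ((i + (n + 1))! : ℝ)⁻¹ * ‖M‖ ^ (i + (n + 1)) := by
        rw [norm_smul, norm_inv, RCLike.norm_natCast]
        gcongr
        exact norm_pow_le' M (by omega)
    _ ≤ (i ! : ℝ)⁻¹ * ‖M‖ ^ (i + (n + 1)) := by
        gcongr
        exact Nat.le_add_right i (n + 1)
    _ = ‖M‖ ^ (n + 1) * (‖M‖ ^ i / i !) := by ring

theorem norm_exp_sub_expQuadratic_le (M : 𝔸) :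
    ‖exp M - expQuadratic 𝕂 M‖ ≤ ‖M‖ ^ 3 * Real.exp ‖M‖ := by
  simpa [expQuadratic, Finset.sum_range_succ] using norm_exp_sub_sum_range_le (𝕂 := 𝕂) M 2

theorem isBigO_exp_smul_sub_expQuadratic (M : 𝔸) (r : ℝ) :
    (fun y : 𝕂 => exp (y • M) - expQuadratic 𝕂 (y • M)) =O[𝓟 (closedBall 0 r)]
      fun y => y ^ 3 := by
  refine isBigO_principal.mpr ⟨‖M‖ ^ 3 * Real.exp (r * ‖M‖), fun y hy => ?_⟩
  have hy : ‖y‖ ≤ r := mem_closedBall_zero_iff.mp hy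
  calc ‖exp (y • M) - expQuadratic 𝕂 (y • M)‖ ≤ ‖y • M‖ ^ 3 * Real.exp ‖y • M‖ :=
        norm_exp_sub_expQuadratic_le _
    _ = ‖M‖ ^ 3 * Real.exp (‖y‖ * ‖M‖) * ‖y ^ 3‖ := by rw [norm_smul, norm_pow]; ring
    _ ≤ ‖M‖ ^ 3 * Real.exp (r * ‖M‖) * ‖y ^ 3‖ := by gcongr

end ExpRemainder

namespace Asymptotics

variable {α 𝕜 R : Type*} [NormedField 𝕜] [SeminormedRing R] {l : Filter α}

theorem IsBigO.mul_sub_mul {f₁ f₂ g₁ g₂ : α → R} {k : α → 𝕜}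
    (h₁ : (fun x => f₁ x - g₁ x) =O[l] k) (h₂ : (fun x => f₂ x - g₂ x) =O[l] k)
    (hg₁ : g₁ =O[l] fun _ => (1 : 𝕜)) (hf₂ : f₂ =O[l] fun _ => (1 : 𝕜)) :
    (fun x => f₁ x * f₂ x - g₁ x * g₂ x) =O[l] k := by
  have hsplit : ∀ x, f₁ x * f₂ x - g₁ x * g₂ x = (f₁ x - g₁ x) * f₂ x + g₁ x * (f₂ x - g₂ x) :=
    fun x => by noncomm_ring
  refine IsBigO.congr_left ?_ (fun x => (hsplit x).symm)
  exact ((h₁.mul hf₂).congr_right fun x => mul_one (k x)).add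
    ((hg₁.mul h₂).congr_right fun x => one_mul (k x))

end Asymptotics

section StrangDefect

variable {α 𝕜 𝔸 : Type*} [NormedField 𝕜] [CharZero 𝕜] [NormedRing 𝔸] [NormedAlgebra 𝕜 𝔸]
  {l : Filter α}

theorem isBigO_expQuadratic_mul_mul_sub {a b : α → 𝔸} {g : α → 𝕜} (ha : a =O[l] g)
    (hb : b =O[l] g) (hg : g =O[l] fun _ => (1 : 𝕜)) :
    (fun x => expQuadratic 𝕜 (a x) * expQuadratic 𝕜 (b x) * expQuadratic 𝕜 (a x)
      - expQuadratic 𝕜 (a x + b x + a x)) =O[l] fun x => g x ^ 3 := by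
  set s := fun x => (2 : 𝕜)⁻¹ • a x ^ 2
  set t := fun x => (2 : 𝕜)⁻¹ • b x ^ 2
  -- Each term has at least three factors that are `O(g)`, counting `s` and `t` as two each.
  have hdefect : ∀ x, expQuadratic 𝕜 (a x) * expQuadratic 𝕜 (b x) * expQuadratic 𝕜 (a x)
      - expQuadratic 𝕜 (a x + b x + a x) = (a x + s x + (b x + t x)) * s x
        + s x * (a x + b x) + (a x + s x) * t x + t x * a x
        + (a x + s x) * (b x + t x) * (a x + s x) := fun x => by
    simp only [expQuadratic, s, t, pow_two, mul_add, add_mul, smul_mul_assoc, mul_smul_comm,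
      smul_smul, smul_add, mul_one, one_mul, mul_assoc]
    module
  have hs : s =O[l] fun x => g x ^ 2 := (ha.pow 2).const_smul_left (2 : 𝕜)⁻¹
  have ht : t =O[l] fun x => g x ^ 2 := (hb.pow 2).const_smul_left (2 : 𝕜)⁻¹
  have hsq : (fun x => g x ^ 2) =O[l] g :=
    (hg.mul (isBigO_refl g l)).congr (fun x => by ring) (fun x => by ring)
  have hα : (fun x => a x + s x) =O[l] g := ha.add (hs.trans hsq)
  have hβ : (fun x => b x + t x) =O[l] g := hb.add (ht.trans hsq)
  have hcube : ∀ x, g x * g x ^ 2 = g x ^ 3 := fun x => by ring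
  have hcube' : ∀ x, g x ^ 2 * g x = g x ^ 3 := fun x => by ring
  have hcube'' : ∀ x, g x * g x * g x = g x ^ 3 := fun x => by ring
  refine IsBigO.congr_left ?_ (fun x => (hdefect x).symm)
  exact ((((hα.add hβ).mul hs).congr_right hcube).add
    ((hs.mul (ha.add hb)).congr_right hcube')).add
    ((hα.mul ht).congr_right hcube) |>.add ((ht.mul ha).congr_right hcube') |>.add
    (((hα.mul hβ).mul hα).congr_right hcube'')

end StrangDefect

theorem stmt_8 (n : ℕ) (A B : Matrix (Fin n) (Fin n) ℂ) :
    ∃ C : ℝ, ∀ x : ℂ, ‖x‖ ≤ 1 →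
      ‖NormedSpace.exp ((x / 2) • A) * NormedSpace.exp (x • B) * NormedSpace.exp ((x / 2) • A)
          - NormedSpace.exp (x • (A + B))‖ ≤ C * ‖x‖ ^ 3 := by
  set A' := (2 : ℂ)⁻¹ • A
  have hhalf : ∀ x : ℂ, (x / 2) • A = x • A' := fun x => by rw [smul_smul, div_eq_mul_inv]
  have hsum : ∀ x : ℂ, x • (A + B) = x • A' + x • B + x • A' := fun x => by
    simp only [A', ← smul_add]
    module
  set l := 𝓟 (closedBall (0 : ℂ) 1)
  have hbdd : ∀ f : ℂ → Matrix (Fin n) (Fin n) ℂ, Continuous f → f =O[l] fun _ => (1 : ℂ) :=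
    fun f hf => hf.continuousOn.isBigO_principal (isCompact_closedBall 0 1) (by norm_num)
  have hlin : ∀ M : Matrix (Fin n) (Fin n) ℂ, (fun x : ℂ => x • M) =O[l] fun x => x :=
    fun M => IsBigO.of_bound ‖M‖ (Eventually.of_forall fun x => by rw [norm_smul, mul_comm])
  have hexpA := isBigO_exp_smul_sub_expQuadratic (𝕂 := ℂ) A' 1
  have hproduct := (hexpA.mul_sub_mul (isBigO_exp_smul_sub_expQuadratic B 1)
      (hbdd _ (by unfold expQuadratic; fun_prop)) (hbdd _ (by fun_prop))).mul_sub_mul hexpA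
      (hbdd _ (by unfold expQuadratic; fun_prop)) (hbdd _ (by fun_prop))
  have hdefect := isBigO_expQuadratic_mul_mul_sub (hlin A') (hlin B)
    (continuous_id.continuousOn.isBigO_principal (isCompact_closedBall 0 1) (by norm_num))
  obtain ⟨C, hC⟩ := isBigO_principal.mp
    ((hproduct.add hdefect).sub (isBigO_exp_smul_sub_expQuadratic (A + B) 1))
  refine ⟨C, fun x hx => ?_⟩
  have hx3 := hC x (mem_closedBall_zero_iff.mpr hx)
  rw [← hsum, norm_pow] at hx3
  rw [hhalf]
  refine (le_of_eq ?_).trans hx3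
  congr 1
  abel
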